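/- arXiv:1304.2172 — 3 statements merged into one kernel-verified Lean document; each statement's English description precedes it below -/
import Mathlib

section
/- Let c be a finite nonzero positive constant and let P, P_X be probability mass functions on a finite alphabet 𝒳 with P ≠ P_X. Then h_c(P, P_X) < D(P‖P_X), where h_c(P,Q) = D(P‖U) + c·D(Q‖U) with U = P/(1+c) + cQ/(1+c). -/
open Finset Filter Topology
open scoped Classical

/-- Kullback-Leibler divergence (base-2 logarithm) on a finite alphabet. -/
noncomputable def klDiv {X : Type*} [Fintype X] (P Q : X → ℝ) : ℝ :=
  ∑ a, P a * Real.logb 2 (P a / Q a)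

/-- `P` is a probability mass function on the finite alphabet `X`. -/
def IsPmf {X : Type*} [Fintype X] (P : X → ℝ) : Prop :=
  (∀ a, 0 ≤ P a) ∧ ∑ a, P a = 1

/-- Empirical pmf (type) of a sequence. -/
noncomputable def empPmf {X : Type*} [Fintype X] [DecidableEq X] {n : ℕ}
    (x : Fin n → X) (a : X) : ℝ :=
  ((Finset.univ.filter (fun i => x i = a)).card : ℝ) / n

/-- The mixture `U = P/(1+c) + cQ/(1+c)`. -/
noncomputable def mixPmf {X : Type*} (c : ℝ) (P Q : X → ℝ) : X → ℝ :=
  fun a => P a / (1 + c) + c * Q a / (1 + c)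

/-- Generalized log-likelihood ratio function `h_c`. -/
noncomputable def hGen {X : Type*} [Fintype X] (c : ℝ) (P Q : X → ℝ) : ℝ :=
  klDiv P (mixPmf c P Q) + c * klDiv Q (mixPmf c P Q)

/-- Shannon entropy (base 2). -/
noncomputable def shannonEntropy {X : Type*} [Fintype X] (P : X → ℝ) : ℝ :=
  -∑ a, P a * Real.logb 2 (P a)


/-!
Since `(1 + c) U = P + c P_X`, the logarithms regroup to the exact identity
`D(P‖P_X) - h_c(P, P_X) = (1 + c) D(U‖P_X)`, and `U ≠ P_X` as soon as `P ≠ P_X`.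
Strict positivity of `D(U‖P_X)` comes from writing each summand `u log (u / q)` as
`q · klFun (u / q) + u - q`, where `klFun x = x log x + 1 - x` vanishes only at `x = 1`.
-/

open Real
open InformationTheory (klFun klFun_apply klFun_nonneg klFun_eq_zero_iff)

lemma mul_log_div_eq_mul_klFun {x y : ℝ} (hy : 0 < y) :
    x * log (x / y) = y * klFun (x / y) + x - y := by
  rw [klFun_apply]
  field_simp
  ring

lemma mul_logb_div_sub_mul_logb_div {b x y z : ℝ} (hy : y ≠ 0) (hz : z ≠ 0) :
    x * logb b (x / y) - x * logb b (x / z) = x * logb b (z / y) := by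
  rcases eq_or_ne x 0 with rfl | hx
  · simp
  · rw [logb_div hx hy, logb_div hx hz, logb_div hz hy]
    ring

section

variable {X : Type*}

theorem klDiv_pos [Fintype X] {P Q : X → ℝ} (hP : IsPmf P) (hQ : IsPmf Q) (hQpos : ∀ a, 0 < Q a)
    (hne : P ≠ Q) : 0 < klDiv P Q := by
  obtain ⟨a₀, ha₀⟩ : ∃ a, P a ≠ Q a := Function.ne_iff.mp hne
  have hterm (a : X) : 0 ≤ Q a * klFun (P a / Q a) :=
    mul_nonneg (hQpos a).le (klFun_nonneg (div_nonneg (hP.1 a) (hQpos a).le))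
  have hterm₀ : 0 < Q a₀ * klFun (P a₀ / Q a₀) := by
    refine mul_pos (hQpos a₀) (lt_of_le_of_ne (klFun_nonneg ?_) fun h => ha₀ ?_)
    · exact div_nonneg (hP.1 a₀) (hQpos a₀).le
    · rwa [eq_comm, klFun_eq_zero_iff (div_nonneg (hP.1 a₀) (hQpos a₀).le),
        div_eq_one_iff_eq (hQpos a₀).ne'] at h
  have hlog : ∑ a, P a * log (P a / Q a) = ∑ a, Q a * klFun (P a / Q a) := by
    simp only [mul_log_div_eq_mul_klFun (hQpos _), sum_sub_distrib, sum_add_distrib, hP.2, hQ.2,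
      add_sub_cancel_right]
  have hsum : 0 < ∑ a, P a * log (P a / Q a) :=
    hlog ▸ sum_pos' (fun a _ => hterm a) ⟨a₀, mem_univ a₀, hterm₀⟩
  simp only [klDiv, logb, ← mul_div_assoc, ← sum_div]
  exact div_pos hsum (log_pos one_lt_two)

lemma mixPmf_pos {c : ℝ} (hc : 0 < c) {P Q : X → ℝ} (hP : ∀ a, 0 ≤ P a) (hQ : ∀ a, 0 < Q a)
    (a : X) : 0 < mixPmf c P Q a := by
  unfold mixPmf
  have := hP a
  have := hQ a
  positivity

lemma isPmf_mixPmf [Fintype X] {c : ℝ} (hc : 0 ≤ c) {P Q : X → ℝ} (hP : IsPmf P) (hQ : IsPmf Q) :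
    IsPmf (mixPmf c P Q) := by
  refine ⟨fun a => ?_, ?_⟩
  · unfold mixPmf
    have := hP.1 a
    have := hQ.1 a
    positivity
  · simp only [mixPmf, sum_add_distrib, ← sum_div, ← mul_sum, hP.2, hQ.2]
    field_simp

lemma mixPmf_ne_right {c : ℝ} (hc : 1 + c ≠ 0) {P Q : X → ℝ} (hne : P ≠ Q) :
    mixPmf c P Q ≠ Q := by
  intro h
  refine hne (funext fun a => ?_)
  have ha := congrFun h a
  simp only [mixPmf] at ha
  field_simp at ha
  linarith

theorem klDiv_sub_hGen [Fintype X] {c : ℝ} (hc : 0 < c) {P Q : X → ℝ} (hP : ∀ a, 0 ≤ P a)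
    (hQ : ∀ a, 0 < Q a) : klDiv P Q - hGen c P Q = (1 + c) * klDiv (mixPmf c P Q) Q := by
  set U := mixPmf c P Q with hU
  unfold hGen klDiv
  rw [mul_sum, mul_sum, ← sum_add_distrib, ← sum_sub_distrib]
  refine sum_congr rfl fun a _ => ?_
  have hsplit := mul_logb_div_sub_mul_logb_div (b := 2) (x := P a) (hQ a).ne'
    (mixPmf_pos hc hP hQ a).ne'
  have hinv : logb 2 (Q a / U a) = -logb 2 (U a / Q a) := by rw [← logb_inv, inv_div]
  have hmix : (1 + c) * U a = P a + c * Q a := by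
    simp only [hU, mixPmf]
    field_simp
  linear_combination hsplit - c * Q a * hinv - logb 2 (U a / Q a) * hmix

end

theorem stmt3 {X : Type*} [Fintype X] (c : ℝ) (hc : 0 < c)
    (P PX : X → ℝ) (hP : IsPmf P) (hPX : IsPmf PX) (hPXpos : ∀ a, 0 < PX a)
    (hne : P ≠ PX) :
    hGen c P PX < klDiv P PX := by
  have hgap := klDiv_sub_hGen hc hP.1 hPXpos
  have hdiv : 0 < klDiv (mixPmf c P PX) PX :=
    klDiv_pos (isPmf_mixPmf hc.le hP hPX) hPX hPXpos (mixPmf_ne_right (by positivity) hne)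
  have : 0 < (1 + c) * klDiv (mixPmf c P PX) PX := by positivity
  linarith
end

section
/- Let 𝒳 be a finite alphabet and define h(x^n, t^N) = D(P_{x^n}‖P_{r^{n+N}}) + (N/n)·D(P_{t^N}‖P_{r^{n+N}}), where r^{n+N} is the concatenation of x^n and t^N. Then h(x^n, t^N) admits the equivalent expression h(P_{x^n}, P_{t^N}) = D(P_{x^n}‖P_{t^N}) − ((N+n)/n)·D(P_{r^{n+N}}‖P_{t^N}), and consequently h(P_{x^n}, P_{t^N}) ≤ D(P_{x^n}‖P_{t^N}) with equality only if P_{x^n} = P_{t^N}. -/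
open Finset Filter Topology
open scoped Classical

/-!
With `P, Q, R` the types of `x`, `t` and their concatenation, and `c = N/n`, one has
`P + c Q = (1 + c) R`. Splitting `log (P/R) = log (P/Q) - log (R/Q)` and `log (Q/R) = -log (R/Q)`
turns `D(P‖R) + c D(Q‖R)` termwise into `D(P‖Q) - (1 + c) D(R‖Q)`. The inequality and its equality
case are then Gibbs' inequality `D(R‖Q) ≥ 0`, with equality only if `R = Q`, which forces `P = Q`.
-/

open InformationTheory (klFun klFun_apply klFun_nonneg klFun_eq_zero_iff)

section KLDivergence

variable {X : Type*} [Fintype X] {P Q R : X → ℝ}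

lemma mul_logb_div_eq_sub (b : ℝ) {p q r : ℝ} (hq : q ≠ 0) (hr : r ≠ 0) :
    p * Real.logb b (p / r) = p * Real.logb b (p / q) - p * Real.logb b (r / q) := by
  rcases eq_or_ne p 0 with rfl | hp
  · simp
  rw [← mul_sub, ← Real.logb_div (div_ne_zero hp hq) (div_ne_zero hr hq),
    div_div_div_cancel_right₀ hq]

theorem klDiv_add_mul_klDiv_of_mix (c : ℝ) (hQ : ∀ a, Q a ≠ 0) (hR : ∀ a, R a ≠ 0)
    (hmix : ∀ a, P a + c * Q a = (1 + c) * R a) :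
    klDiv P R + c * klDiv Q R = klDiv P Q - (1 + c) * klDiv R Q := by
  unfold klDiv
  simp only [Finset.mul_sum, ← Finset.sum_add_distrib, ← Finset.sum_sub_distrib]
  refine Finset.sum_congr rfl fun a _ => ?_
  have hQR : Real.logb 2 (Q a / R a) = -Real.logb 2 (R a / Q a) := by
    rw [← Real.logb_inv, inv_div]
  rw [mul_logb_div_eq_sub 2 (hQ a) (hR a), hQR]
  linear_combination (-Real.logb 2 (R a / Q a)) * hmix a

lemma klDiv_eq_sum_mul_klFun (hQ : ∀ a, Q a ≠ 0) (hsum : ∑ a, P a = ∑ a, Q a) :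
    klDiv P Q = (∑ a, Q a * klFun (P a / Q a)) / Real.log 2 := by
  have hterm : ∀ a, Q a * klFun (P a / Q a) = P a * Real.log (P a / Q a) + Q a - P a := by
    intro a
    rw [klFun_apply]
    field_simp [hQ a]
  simp only [hterm, Finset.sum_sub_distrib, Finset.sum_add_distrib, hsum, add_sub_cancel_right,
    klDiv, Real.logb, Finset.sum_div, mul_div_assoc]

lemma klDiv_nonneg (hP : ∀ a, 0 ≤ P a) (hQ : ∀ a, 0 < Q a) (hsum : ∑ a, P a = ∑ a, Q a) :
    0 ≤ klDiv P Q := by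
  rw [klDiv_eq_sum_mul_klFun (fun a => (hQ a).ne') hsum]
  exact div_nonneg (Finset.sum_nonneg fun a _ =>
    mul_nonneg (hQ a).le (klFun_nonneg (div_nonneg (hP a) (hQ a).le))) (Real.log_nonneg one_le_two)

lemma eq_of_klDiv_eq_zero (hP : ∀ a, 0 ≤ P a) (hQ : ∀ a, 0 < Q a)
    (hsum : ∑ a, P a = ∑ a, Q a) (h : klDiv P Q = 0) : P = Q := by
  have hnonneg : ∀ a ∈ Finset.univ, 0 ≤ Q a * klFun (P a / Q a) := fun a _ =>
    mul_nonneg (hQ a).le (klFun_nonneg (div_nonneg (hP a) (hQ a).le))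
  rw [klDiv_eq_sum_mul_klFun (fun a => (hQ a).ne') hsum,
    div_eq_zero_iff, Finset.sum_eq_zero_iff_of_nonneg hnonneg] at h
  have hlog : Real.log 2 ≠ 0 := (Real.log_pos one_lt_two).ne'
  funext a
  have ha := (mul_eq_zero.mp ((h.resolve_right hlog) a (Finset.mem_univ a))).resolve_left
    (hQ a).ne'
  rwa [klFun_eq_zero_iff (div_nonneg (hP a) (hQ a).le), div_eq_one_iff_eq (hQ a).ne'] at ha

end KLDivergence

section EmpiricalPmf

variable {X : Type*} [Fintype X] [DecidableEq X] {n N : ℕ}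

lemma natCast_mul_empPmf (x : Fin n → X) (a : X) :
    (n : ℝ) * empPmf x a = (Finset.univ.filter (fun i => x i = a)).card := by
  rcases n.eq_zero_or_pos with rfl | hn
  · simp
  · exact mul_div_cancel₀ _ (Nat.cast_ne_zero.mpr hn.ne')

lemma empPmf_nonneg (x : Fin n → X) (a : X) : 0 ≤ empPmf x a := by
  unfold empPmf
  positivity

lemma sum_empPmf (hn : 0 < n) (x : Fin n → X) : ∑ a, empPmf x a = 1 := by
  unfold empPmf
  rw [← Finset.sum_div, ← Nat.cast_sum, ← Finset.card_eq_sum_card_fiberwise fun i _ =>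
    Finset.mem_univ (x i)]
  simp [hn.ne']

lemma natCast_add_mul_empPmf_append (x : Fin n → X) (t : Fin N → X) (a : X) :
    ((n : ℝ) + N) * empPmf (Fin.append x t) a = n * empPmf x a + N * empPmf t a := by
  rw [← Nat.cast_add, natCast_mul_empPmf, natCast_mul_empPmf, natCast_mul_empPmf,
    Finset.card_filter, Finset.card_filter, Finset.card_filter, Fin.sum_univ_add]
  simp

lemma empPmf_append_pos (x : Fin n → X) {t : Fin N → X} {a : X} (ht : 0 < empPmf t a) :
    0 < empPmf (Fin.append x t) a := by
  have hN : (0 : ℝ) < N := by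
    rcases N.eq_zero_or_pos with rfl | hN
    · simp [empPmf] at ht
    · exact_mod_cast hN
  refine pos_of_mul_pos_right (a := (n : ℝ) + N) ?_ (by positivity)
  rw [natCast_add_mul_empPmf_append]
  exact add_pos_of_nonneg_of_pos (by positivity [empPmf_nonneg x a]) (by positivity)

end EmpiricalPmf

theorem stmt8 {X : Type*} [Fintype X] [DecidableEq X] {n N : ℕ} (hn : 0 < n) (hN : 0 < N)
    (x : Fin n → X) (t : Fin N → X) (htpos : ∀ a, 0 < empPmf t a) :
    klDiv (empPmf x) (empPmf (Fin.append x t)) +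
        ((N : ℝ) / n) * klDiv (empPmf t) (empPmf (Fin.append x t)) =
      klDiv (empPmf x) (empPmf t) -
        (((N : ℝ) + n) / n) * klDiv (empPmf (Fin.append x t)) (empPmf t) ∧
    klDiv (empPmf x) (empPmf (Fin.append x t)) +
        ((N : ℝ) / n) * klDiv (empPmf t) (empPmf (Fin.append x t)) ≤
      klDiv (empPmf x) (empPmf t) ∧
    (klDiv (empPmf x) (empPmf (Fin.append x t)) +
        ((N : ℝ) / n) * klDiv (empPmf t) (empPmf (Fin.append x t)) =
      klDiv (empPmf x) (empPmf t) → empPmf x = empPmf t) := by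
  set R := empPmf (Fin.append x t)
  have hmix : ∀ a, empPmf x a + N / n * empPmf t a = (1 + N / n) * R a := fun a => by
    field_simp
    linear_combination -natCast_add_mul_empPmf_append x t a
  have hRpos : ∀ a, 0 < R a := fun a => empPmf_append_pos x (htpos a)
  have hsum : ∑ a, R a = ∑ a, empPmf t a := by
    rw [sum_empPmf (by omega), sum_empPmf hN]
  have hRQ := klDiv_nonneg (fun a => (hRpos a).le) htpos hsum
  have hid := klDiv_add_mul_klDiv_of_mix (N / n) (fun a => (htpos a).ne')
    (fun a => (hRpos a).ne') hmix
  rw [show 1 + (N : ℝ) / n = (N + n) / n by field_simp; ring] at hid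
  have hcoef : (0 : ℝ) < (N + n) / n := by positivity
  refine ⟨hid, ?_, fun heq => ?_⟩
  · rw [hid]
    exact sub_le_self _ (mul_nonneg hcoef.le hRQ)
  · have hRQ0 : klDiv R (empPmf t) = 0 :=
      (mul_eq_zero.mp (by linarith)).resolve_left hcoef.ne'
    have hR : R = empPmf t := eq_of_klDiv_eq_zero (fun a => (hRpos a).le) htpos hsum hRQ0
    funext a
    linear_combination hmix a + (1 + N / n) * congrFun hR a
end

section
/- Let N(n)/n → 0 as n → ∞, and fix pmf's P, Q on 𝒳 with P(a) > 0 for all a. Let U_n = (n/(n+N(n)))·P + (N(n)/(n+N(n)))·Q. Then both D(P‖U_n) → 0 and (N(n)/n)·D(Q‖U_n) → 0, hence the generalized log-likelihood ratio h(P,Q) = D(P‖U_n) + (N(n)/n)·D(Q‖U_n) tends to 0. -/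
open Finset Filter Topology
open scoped Classical

/-!
With `c = N(n)/n`, the mixture `U_n` is `mixPmf c P Q`, which depends continuously on `c` and
equals `P` at `c = 0`. Since `P` has full support, `D(R‖·)` is continuous at `P` for every `R`,
so `D(P‖U_n) → D(P‖P) = 0` while `D(Q‖U_n)` stays bounded, whence `(N(n)/n)·D(Q‖U_n) → 0`.
-/

theorem klDiv_self {X : Type*} [Fintype X] (P : X → ℝ) : klDiv P P = 0 := by
  refine Finset.sum_eq_zero fun a _ => ?_
  rcases eq_or_ne (P a) 0 with h | h
  · simp [h]
  · simp [div_self h]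

theorem continuousAt_klDiv_right {X : Type*} [Fintype X] (R : X → ℝ) {V : X → ℝ}
    (hV : ∀ a, V a ≠ 0) : ContinuousAt (klDiv R) V := by
  refine tendsto_finsetSum _ fun a _ => ?_
  rcases eq_or_ne (R a) 0 with h | h
  · simp only [h, zero_mul]
    exact continuousAt_const
  · exact continuousAt_const.mul <|
      (continuousAt_const.div (continuous_apply a).continuousAt (hV a)).logb (div_ne_zero h (hV a))

theorem mixPmf_zero {X : Type*} (P Q : X → ℝ) : mixPmf 0 P Q = P := by
  ext a
  simp [mixPmf]

theorem continuousAt_mixPmf {X : Type*} (P Q : X → ℝ) {c : ℝ} (hc : 1 + c ≠ 0) :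
    ContinuousAt (fun t => mixPmf t P Q) c :=
  continuousAt_pi.2 fun _ => by
    unfold mixPmf
    fun_prop (disch := exact hc)

theorem mixPmf_div {X : Type*} (P Q : X → ℝ) {n m : ℝ} (hn : n ≠ 0) (hnm : n + m ≠ 0) :
    mixPmf (m / n) P Q = fun a => n / (n + m) * P a + m / (n + m) * Q a := by
  ext a
  simp only [mixPmf]
  field_simp

theorem tendsto_klDiv_mixPmf {X ι : Type*} [Fintype X] {l : Filter ι} {c : ι → ℝ}
    (hc : Tendsto c l (𝓝 0)) (R : X → ℝ) {P : X → ℝ} (hP : ∀ a, P a ≠ 0) (Q : X → ℝ) :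
    Tendsto (fun i => klDiv R (mixPmf (c i) P Q)) l (𝓝 (klDiv R P)) := by
  have hmix : Tendsto (fun i => mixPmf (c i) P Q) l (𝓝 P) := by
    have h := (continuousAt_mixPmf P Q (c := 0) (by norm_num)).tendsto.comp hc
    rwa [mixPmf_zero] at h
  exact (continuousAt_klDiv_right R hP).tendsto.comp hmix

theorem stmt13_general {X : Type*} [Fintype X] (N : ℕ → ℕ)
    (hN : Tendsto (fun n : ℕ => (N n : ℝ) / n) atTop (𝓝 0))
    (P Q : X → ℝ) (hPpos : ∀ a, 0 < P a) :
    Tendsto (fun n : ℕ =>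
        klDiv P (fun a => ((n : ℝ) / ((n : ℝ) + N n)) * P a + ((N n : ℝ) / ((n : ℝ) + N n)) * Q a))
      atTop (𝓝 0) ∧
    Tendsto (fun n : ℕ => ((N n : ℝ) / n) *
        klDiv Q (fun a => ((n : ℝ) / ((n : ℝ) + N n)) * P a + ((N n : ℝ) / ((n : ℝ) + N n)) * Q a))
      atTop (𝓝 0) ∧
    Tendsto (fun n : ℕ =>
        klDiv P (fun a => ((n : ℝ) / ((n : ℝ) + N n)) * P a + ((N n : ℝ) / ((n : ℝ) + N n)) * Q a) +
        ((N n : ℝ) / n) *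
        klDiv Q (fun a => ((n : ℝ) / ((n : ℝ) + N n)) * P a + ((N n : ℝ) / ((n : ℝ) + N n)) * Q a))
      atTop (𝓝 0) := by
  have hP : ∀ a, P a ≠ 0 := fun a => (hPpos a).ne'
  have hU : ∀ᶠ n : ℕ in atTop, mixPmf ((N n : ℝ) / n) P Q =
      fun a => ((n : ℝ) / ((n : ℝ) + N n)) * P a + ((N n : ℝ) / ((n : ℝ) + N n)) * Q a := by
    filter_upwards [eventually_gt_atTop 0] with n hn
    exact mixPmf_div P Q (by positivity) (by positivity)
  have hDP : Tendsto (fun n : ℕ => klDiv P (mixPmf ((N n : ℝ) / n) P Q)) atTop (𝓝 0) := by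
    simpa only [klDiv_self] using tendsto_klDiv_mixPmf hN P hP Q
  have hDQ := hN.mul (tendsto_klDiv_mixPmf hN Q hP Q)
  rw [zero_mul] at hDQ
  have h1 := hDP.congr' (hU.mono fun n hn => by rw [hn])
  have h2 := hDQ.congr' (hU.mono fun n hn => by rw [hn])
  exact ⟨h1, h2, by simpa only [add_zero] using h1.add h2⟩

theorem stmt13 {X : Type*} [Fintype X] (N : ℕ → ℕ)
    (hN : Tendsto (fun n : ℕ => (N n : ℝ) / n) atTop (𝓝 0))
    (P Q : X → ℝ) (hP : IsPmf P) (hQ : IsPmf Q) (hPpos : ∀ a, 0 < P a) :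
    Tendsto (fun n : ℕ =>
        klDiv P (fun a => ((n : ℝ) / ((n : ℝ) + N n)) * P a + ((N n : ℝ) / ((n : ℝ) + N n)) * Q a))
      atTop (𝓝 0) ∧
    Tendsto (fun n : ℕ => ((N n : ℝ) / n) *
        klDiv Q (fun a => ((n : ℝ) / ((n : ℝ) + N n)) * P a + ((N n : ℝ) / ((n : ℝ) + N n)) * Q a))
      atTop (𝓝 0) ∧
    Tendsto (fun n : ℕ =>
        klDiv P (fun a => ((n : ℝ) / ((n : ℝ) + N n)) * P a + ((N n : ℝ) / ((n : ℝ) + N n)) * Q a) +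
        ((N n : ℝ) / n) *
        klDiv Q (fun a => ((n : ℝ) / ((n : ℝ) + N n)) * P a + ((N n : ℝ) / ((n : ℝ) + N n)) * Q a))
      atTop (𝓝 0) :=
  stmt13_general N hN P Q hPpos
end
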